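/- Let L be a bounded lattice, σ ∈ L∖{0,1}, U* a uninorm on [σ,1] with neutral element e, and p ∈ I_σ^e. Assume that x ∧ p = 0 for all x ∈ I_{e,σ} with x ∥ p, and that I_σ^e ∪ I_{e,σ} ∪ (0,σ) ≠ ∅. Then the function U_p given by formula (2) is a uninorm on L with neutral element e if and only if U* ∈ U_t and x ∥ y for all x ∈ I_{e,σ} with x ∦ p and all y ∈ I_e^σ. -/
import Mathlib


attribute [local instance] Classical.propDecidable

variable {L : Type*}

/-- `a` and `b` are incomparable. -/
def Incomp [Lattice L] (a b : L) : Prop := ¬ a ≤ b ∧ ¬ b ≤ a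

/-- `U` is a uninorm on the subset `S` of the bounded lattice `L` with neutral element `e`:
it maps `S × S` into `S`, is commutative, associative, increasing in each variable on `S`,
and has `e ∈ S` as neutral element. -/
def IsUninormOn [Lattice L] [BoundedOrder L] (U : L → L → L) (S : Set L) (e : L) : Prop :=
  e ∈ S ∧
  (∀ x ∈ S, ∀ y ∈ S, U x y ∈ S) ∧
  (∀ x ∈ S, ∀ y ∈ S, U x y = U y x) ∧
  (∀ x ∈ S, ∀ y ∈ S, ∀ z ∈ S, U (U x y) z = U x (U y z)) ∧
  (∀ x ∈ S, ∀ y ∈ S, ∀ z ∈ S, x ≤ y → U x z ≤ U y z ∧ U z x ≤ U z y) ∧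
  (∀ x ∈ S, U e x = x ∧ U x e = x)

/-- Formula (2): the function `U_p` built from a uninorm `Ustar` on `[σ, ⊤]` with neutral
element `e` and an element `p ∈ L`. Here `[σ, ⊤] = {x | σ ≤ x}`, `[e, ⊤] = {x | e ≤ x}`,
`I_{e,σ} = {x | x ∥ e ∧ x ∥ σ}`. -/
noncomputable def Up [Lattice L] [BoundedOrder L] (Ustar : L → L → L) (σ e p : L)
    (x y : L) : L :=
  if σ ≤ x ∧ σ ≤ y then Ustar x y
  else if ¬ σ ≤ x ∧ e ≤ y then x
  else if e ≤ x ∧ ¬ σ ≤ y then y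
  else if (Incomp x e ∧ Incomp x σ) ∧ (Incomp y e ∧ Incomp y σ) then x ⊓ y ⊓ p
  else ⊥

section AuxUp

variable [Lattice L] [BoundedOrder L] {Ustar : L → L → L} {σ e p : L}

lemma Up_eq1 {x y : L} (hx : σ ≤ x) (hy : σ ≤ y) :
    Up Ustar σ e p x y = Ustar x y := by
  unfold Up; rw [if_pos ⟨hx, hy⟩]

lemma Up_eq2 {x y : L} (hx : ¬ σ ≤ x) (hy : e ≤ y) :
    Up Ustar σ e p x y = x := by
  unfold Up; rw [if_neg (fun h => hx h.1), if_pos ⟨hx, hy⟩]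

lemma Up_eq3 {x y : L} (hσe : σ ≤ e) (hx : e ≤ x) (hy : ¬ σ ≤ y) :
    Up Ustar σ e p x y = y := by
  unfold Up
  rw [if_neg (fun h => hy h.2), if_neg (fun h => h.1 (hσe.trans hx)), if_pos ⟨hx, hy⟩]

lemma Up_eq4 {x y : L} (hx : Incomp x e ∧ Incomp x σ) (hy : Incomp y e ∧ Incomp y σ) :
    Up Ustar σ e p x y = x ⊓ y ⊓ p := by
  unfold Up
  rw [if_neg (fun h => hx.2.2 h.1), if_neg (fun h => hy.1.2 h.2),
    if_neg (fun h => hx.1.2 h.1), if_pos ⟨hx, hy⟩]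

lemma Up_eq_bot {x y : L} (h1 : ¬ (σ ≤ x ∧ σ ≤ y)) (h2 : ¬ (¬ σ ≤ x ∧ e ≤ y))
    (h3 : ¬ (e ≤ x ∧ ¬ σ ≤ y))
    (h4 : ¬ ((Incomp x e ∧ Incomp x σ) ∧ (Incomp y e ∧ Incomp y σ))) :
    Up Ustar σ e p x y = ⊥ := by
  unfold Up
  rw [if_neg h1, if_neg h2, if_neg h3, if_neg h4]

/-- `x ∉ [σ,1]`, `y ∈ [σ,1] \ [e,1]`. -/
lemma Up_bot_nA_A' {x y : L} (hσe : σ ≤ e) (hx : ¬ σ ≤ x) (hy : σ ≤ y) (hey : ¬ e ≤ y) :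
    Up Ustar σ e p x y = ⊥ :=
  Up_eq_bot (fun h => hx h.1) (fun h => hey h.2) (fun h => hx (hσe.trans h.1))
    (fun h => h.2.2.2 hy)

/-- `x ∈ [σ,1] \ [e,1]`, `y ∉ [σ,1]`. -/
lemma Up_bot_A'_nA {x y : L} (hx : σ ≤ x) (hex : ¬ e ≤ x) (hy : ¬ σ ≤ y) :
    Up Ustar σ e p x y = ⊥ :=
  Up_eq_bot (fun h => hy h.2) (fun h => h.1 hx) (fun h => hex h.1)
    (fun h => h.1.2.2 hx)

/-- both outside `[σ,1]`, not both in `I_{e,σ}`. -/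
lemma Up_bot_nn {x y : L} (hσe : σ ≤ e) (hx : ¬ σ ≤ x) (hy : ¬ σ ≤ y)
    (hB : ¬ ((Incomp x e ∧ Incomp x σ) ∧ (Incomp y e ∧ Incomp y σ))) :
    Up Ustar σ e p x y = ⊥ :=
  Up_eq_bot (fun h => hx h.1) (fun h => hy (hσe.trans h.2)) (fun h => hx (hσe.trans h.1)) hB

/-- both outside `[σ,1]`, first one comparable with `e`. -/
lemma Up_bot_ln {x y : L} (hσe : σ ≤ e) (hx : ¬ σ ≤ x) (hxI : ¬ Incomp x e)
    (hy : ¬ σ ≤ y) : Up Ustar σ e p x y = ⊥ :=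
  Up_bot_nn hσe hx hy (fun h => hxI h.1.1)

/-- both outside `[σ,1]`, second one comparable with `e`. -/
lemma Up_bot_rn {x y : L} (hσe : σ ≤ e) (hx : ¬ σ ≤ x) (hy : ¬ σ ≤ y)
    (hyI : ¬ Incomp y e) : Up Ustar σ e p x y = ⊥ :=
  Up_bot_nn hσe hx hy (fun h => hyI h.2.1)

end AuxUp

theorem statement7 [Lattice L] [BoundedOrder L]
    (σ e p : L) (Ustar : L → L → L)
    (hσ0 : σ ≠ ⊥) (hσ1 : σ ≠ ⊤)
    (hU : IsUninormOn Ustar {x : L | σ ≤ x} e)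
    (hp : Incomp p σ ∧ ¬ Incomp p e)
    (hmp : ∀ x : L, Incomp x e → Incomp x σ → Incomp x p → x ⊓ p = ⊥)
    (hne : ∃ x : L, (Incomp x σ ∧ ¬ Incomp x e) ∨ (Incomp x e ∧ Incomp x σ) ∨
      (⊥ < x ∧ x < σ)) :
    IsUninormOn (Up Ustar σ e p) Set.univ e ↔
      ((∀ x : L, σ ≤ x → ∀ y : L, σ ≤ y → e ≤ Ustar x y → e ≤ x ∧ e ≤ y) ∧
        ∀ x y : L, Incomp x e → Incomp x σ → ¬ Incomp x p →
          Incomp y e → ¬ Incomp y σ → Incomp x y) := by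
  have hσe : σ ≤ e := hU.1
  have hσb : ¬ σ ≤ (⊥ : L) := fun h => hσ0 (le_bot_iff.mp h)
  have hIb : ¬ Incomp (⊥ : L) e := fun h => h.1 bot_le
  have hpe : p ≤ e := by
    by_contra h
    exact hp.2 ⟨h, fun h' => hp.1.2 (hσe.trans h')⟩
  constructor
  · -- forward direction
    intro h
    constructor
    · -- the condition U* ∈ U_t
      obtain ⟨z, hz⟩ := hne
      have hzA : ¬ σ ≤ z := by
        rcases hz with h' | h' | h'
        · exact h'.1.2
        · exact h'.2.2
        · exact h'.2.not_ge
      have hzb : z ≠ ⊥ := by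
        rcases hz with h' | h' | h'
        · exact fun hb => h'.1.1 (hb ▸ bot_le)
        · exact fun hb => h'.2.1 (hb ▸ bot_le)
        · exact h'.1.ne'
      intro x hx y hy he
      by_contra hc
      have hassoc := h.2.2.2.1 z (Set.mem_univ z) x (Set.mem_univ x) y (Set.mem_univ y)
      rw [Up_eq1 hx hy, Up_eq2 hzA he] at hassoc
      by_cases hex : e ≤ x
      · have hey : ¬ e ≤ y := fun h' => hc ⟨hex, h'⟩
        rw [Up_eq2 hzA hex, Up_bot_nA_A' hσe hzA hy hey] at hassoc
        exact hzb hassoc.symm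
      · rw [Up_bot_nA_A' hσe hzA hx hex] at hassoc
        by_cases hey : e ≤ y
        · rw [Up_eq2 hσb hey] at hassoc
          exact hzb hassoc.symm
        · rw [Up_bot_nA_A' hσe hσb hy hey] at hassoc
          exact hzb hassoc.symm
    · -- the incomparability condition
      intro x y hxe hxσ hxp hye hyσ
      have hσy : σ ≤ y := by
        by_contra h'
        exact hyσ ⟨fun h'' => hye.1 (h''.trans hσe), h'⟩
      constructor
      · intro hxy
        have hmono := (h.2.2.2.2.1 x (Set.mem_univ x) y (Set.mem_univ y)
          x (Set.mem_univ x) hxy).1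
        rw [Up_eq4 ⟨hxe, hxσ⟩ ⟨hxe, hxσ⟩, Up_bot_A'_nA hσy hye.2 hxσ.2] at hmono
        rw [inf_idem] at hmono
        have hxpb : x ⊓ p = ⊥ := le_bot_iff.mp hmono
        by_cases hxp2 : x ≤ p
        · have : x = ⊥ := by rw [inf_eq_left.mpr hxp2] at hxpb; exact hxpb
          exact hxσ.1 (this ▸ bot_le)
        · have hpx : p ≤ x := by
            by_contra h'
            exact hxp ⟨hxp2, h'⟩
          have : p = ⊥ := by rw [inf_eq_right.mpr hpx] at hxpb; exact hxpb
          exact hp.1.1 (this ▸ bot_le)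
      · intro hyx
        exact hxσ.2 (hσy.trans hyx)
  · -- backward direction
    rintro ⟨hUt, hC⟩
    obtain ⟨heS, hcl, hcm, has, hmo, hnt⟩ := hU
    -- region facts for inf with p
    have hws : ∀ a b : L, ¬ σ ≤ a ⊓ b ⊓ p := fun a b h => hp.1.2 (h.trans inf_le_right)
    have hwI : ∀ a b : L, ¬ Incomp (a ⊓ b ⊓ p) e :=
      fun a b h => h.1 (inf_le_right.trans hpe)
    have hclA : ∀ x y : L, σ ≤ x → σ ≤ y → σ ≤ Ustar x y := fun x y hx hy => hcl x hx y hy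
    have hEE : ∀ x y : L, σ ≤ x → σ ≤ y → e ≤ x → e ≤ y → e ≤ Ustar x y :=
      fun x y hx hy hex hey =>
        hey.trans (((hnt y hy).1).ge.trans ((hmo e heS x hx y hy hex).1))
    -- value of `Up x y` for `x, y ∉ [σ,1]`: it is `⊥` or `x⊓y⊓p`, in either case
    -- outside `[σ,1]` and comparable with `e`.
    have hinner : ∀ a b : L, ¬ σ ≤ a → ¬ σ ≤ b →
        ¬ σ ≤ Up Ustar σ e p a b ∧ ¬ Incomp (Up Ustar σ e p a b) e := by
      intro a b ha hb
      by_cases h4 : (Incomp a e ∧ Incomp a σ) ∧ (Incomp b e ∧ Incomp b σ)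
      · rw [Up_eq4 h4.1 h4.2]
        exact ⟨hws a b, hwI a b⟩
      · rw [Up_bot_nn hσe ha hb h4]
        exact ⟨hσb, hIb⟩
    -- commutativity
    have hcomm : ∀ x y : L, Up Ustar σ e p x y = Up Ustar σ e p y x := by
      intro x y
      by_cases hx : σ ≤ x
      · by_cases hy : σ ≤ y
        · rw [Up_eq1 hx hy, Up_eq1 hy hx]
          exact hcm x hx y hy
        · by_cases hex : e ≤ x
          · rw [Up_eq3 hσe hex hy, Up_eq2 hy hex]
          · rw [Up_bot_A'_nA hx hex hy, Up_bot_nA_A' hσe hy hx hex]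
      · by_cases hy : σ ≤ y
        · by_cases hey : e ≤ y
          · rw [Up_eq2 hx hey, Up_eq3 hσe hey hx]
          · rw [Up_bot_nA_A' hσe hx hy hey, Up_bot_A'_nA hy hey hx]
        · by_cases hB : (Incomp x e ∧ Incomp x σ) ∧ (Incomp y e ∧ Incomp y σ)
          · rw [Up_eq4 hB.1 hB.2, Up_eq4 hB.2 hB.1, inf_comm x y]
          · rw [Up_bot_nn hσe hx hy hB, Up_bot_nn hσe hy hx (fun h' => hB ⟨h'.2, h'.1⟩)]
    refine ⟨Set.mem_univ e, fun x _ y _ => Set.mem_univ _, fun x _ y _ => hcomm x y, ?_, ?_, ?_⟩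
    · -- associativity
      intro x _ y _ z _
      by_cases hx : σ ≤ x
      · by_cases hy : σ ≤ y
        · by_cases hz : σ ≤ z
          · -- A A A
            rw [Up_eq1 hx hy, Up_eq1 (hclA x y hx hy) hz, Up_eq1 hy hz,
              Up_eq1 hx (hclA y z hy hz)]
            exact has x hx y hy z hz
          · -- A A ¬A
            rw [Up_eq1 hx hy]
            by_cases hey : e ≤ y
            · by_cases hex : e ≤ x
              · have heU : e ≤ Ustar x y := hEE x y hx hy hex hey
                rw [Up_eq3 hσe heU hz, Up_eq3 hσe hey hz, Up_eq3 hσe hex hz]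
              · have hnU : ¬ e ≤ Ustar x y := fun h' => hex (hUt x hx y hy h').1
                rw [Up_bot_A'_nA (hclA x y hx hy) hnU hz, Up_eq3 hσe hey hz,
                  Up_bot_A'_nA hx hex hz]
            · have hnU : ¬ e ≤ Ustar x y := fun h' => hey (hUt x hx y hy h').2
              rw [Up_bot_A'_nA (hclA x y hx hy) hnU hz, Up_bot_A'_nA hy hey hz]
              by_cases hex : e ≤ x
              · rw [Up_eq3 hσe hex hσb]
              · rw [Up_bot_A'_nA hx hex hσb]
        · by_cases hz : σ ≤ z
          · -- A ¬A A
            by_cases hex : e ≤ x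
            · rw [Up_eq3 hσe hex hy]
              by_cases hez : e ≤ z
              · rw [Up_eq2 hy hez, Up_eq3 hσe hex hy]
              · rw [Up_bot_nA_A' hσe hy hz hez, Up_eq3 hσe hex hσb]
            · rw [Up_bot_A'_nA hx hex hy]
              by_cases hez : e ≤ z
              · rw [Up_eq2 hσb hez, Up_eq2 hy hez, Up_bot_A'_nA hx hex hy]
              · rw [Up_bot_nA_A' hσe hσb hz hez, Up_bot_nA_A' hσe hy hz hez,
                  Up_bot_A'_nA hx hex hσb]
          · -- A ¬A ¬A
            by_cases hex : e ≤ x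
            · rw [Up_eq3 hσe hex hy, Up_eq3 hσe hex (hinner y z hy hz).1]
            · rw [Up_bot_A'_nA hx hex hy, Up_bot_ln hσe hσb hIb hz,
                Up_bot_A'_nA hx hex (hinner y z hy hz).1]
      · by_cases hy : σ ≤ y
        · by_cases hz : σ ≤ z
          · -- ¬A A A
            by_cases hey : e ≤ y
            · rw [Up_eq2 hx hey, Up_eq1 hy hz]
              by_cases hez : e ≤ z
              · have heU : e ≤ Ustar y z := hEE y z hy hz hey hez
                rw [Up_eq2 hx hez, Up_eq2 hx heU]
              · have hnU : ¬ e ≤ Ustar y z := fun h' => hez (hUt y hy z hz h').2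
                rw [Up_bot_nA_A' hσe hx hz hez, Up_bot_nA_A' hσe hx (hclA y z hy hz) hnU]
            · rw [Up_bot_nA_A' hσe hx hy hey, Up_eq1 hy hz]
              have hnU : ¬ e ≤ Ustar y z := fun h' => hey (hUt y hy z hz h').1
              rw [Up_bot_nA_A' hσe hx (hclA y z hy hz) hnU]
              by_cases hez : e ≤ z
              · rw [Up_eq2 hσb hez]
              · rw [Up_bot_nA_A' hσe hσb hz hez]
          · -- ¬A A ¬A
            by_cases hey : e ≤ y
            · rw [Up_eq2 hx hey, Up_eq3 hσe hey hz]
            · rw [Up_bot_nA_A' hσe hx hy hey, Up_bot_A'_nA hy hey hz,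
                Up_bot_ln hσe hσb hIb hz, Up_bot_rn hσe hx hσb hIb]
        · by_cases hz : σ ≤ z
          · -- ¬A ¬A A
            by_cases hez : e ≤ z
            · rw [Up_eq2 (hinner x y hx hy).1 hez, Up_eq2 hy hez]
            · rw [Up_bot_nA_A' hσe (hinner x y hx hy).1 hz hez,
                Up_bot_nA_A' hσe hy hz hez, Up_bot_rn hσe hx hσb hIb]
          · -- ¬A ¬A ¬A
            rw [Up_bot_ln hσe (hinner x y hx hy).1 (hinner x y hx hy).2 hz,
              Up_bot_rn hσe hx (hinner y z hy hz).1 (hinner y z hy hz).2]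
    · -- monotonicity
      have mono1 : ∀ x y z : L, x ≤ y → Up Ustar σ e p x z ≤ Up Ustar σ e p y z := by
        intro x y z hxy
        by_cases hz : σ ≤ z
        · by_cases hx : σ ≤ x
          · have hy : σ ≤ y := hx.trans hxy
            rw [Up_eq1 hx hz, Up_eq1 hy hz]
            exact (hmo x hx y hy z hz hxy).1
          · by_cases hez : e ≤ z
            · rw [Up_eq2 hx hez]
              by_cases hyA : σ ≤ y
              · rw [Up_eq1 hyA hz]
                exact hxy.trans (((hnt y hyA).2).ge.trans ((hmo e heS z hz y hyA hez).2))
              · rw [Up_eq2 hyA hez]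
                exact hxy
            · rw [Up_bot_nA_A' hσe hx hz hez]
              exact bot_le
        · by_cases hex : e ≤ x
          · have hey : e ≤ y := hex.trans hxy
            rw [Up_eq3 hσe hex hz, Up_eq3 hσe hey hz]
          · by_cases hx : σ ≤ x
            · rw [Up_bot_A'_nA hx hex hz]
              exact bot_le
            · by_cases hB : (Incomp x e ∧ Incomp x σ) ∧ (Incomp z e ∧ Incomp z σ)
              · rw [Up_eq4 hB.1 hB.2]
                by_cases hey : e ≤ y
                · rw [Up_eq3 hσe hey hz]
                  exact inf_le_left.trans inf_le_right
                · by_cases hyA : σ ≤ y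
                  · rw [Up_bot_A'_nA hyA hey hz]
                    have hyIe : Incomp y e := ⟨fun h' => hB.1.1.1 (hxy.trans h'), hey⟩
                    have hyσ : ¬ Incomp y σ := fun h' => h'.2 hyA
                    have hxp : Incomp x p := by
                      by_contra h'
                      exact (hC x y hB.1.1 hB.1.2 h' hyIe hyσ).1 hxy
                    have hbp := hmp x hB.1.1 hB.1.2 hxp
                    calc x ⊓ z ⊓ p ≤ x ⊓ p :=
                          le_inf (inf_le_left.trans inf_le_left) inf_le_right
                      _ = ⊥ := hbp
                  · have hyIe : Incomp y e := ⟨fun h' => hB.1.1.1 (hxy.trans h'), hey⟩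
                    have hyIσ : Incomp y σ := ⟨fun h' => hyIe.1 (h'.trans hσe), hyA⟩
                    rw [Up_eq4 ⟨hyIe, hyIσ⟩ hB.2]
                    gcongr
              · rw [Up_bot_nn hσe hx hz hB]
                exact bot_le
      intro x _ y _ z _ hxy
      refine ⟨mono1 x y z hxy, ?_⟩
      rw [hcomm z x, hcomm z y]
      exact mono1 x y z hxy
    · -- neutral element
      intro x _
      by_cases hx : σ ≤ x
      · rw [Up_eq1 hσe hx, Up_eq1 hx hσe]
        exact hnt x hx
      · constructor
        · rw [Up_eq3 hσe le_rfl hx]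
        · rw [Up_eq2 hx le_rfl]
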